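/- Given unit vectors |u⟩, |v⟩ with ⟨u|H|u⟩ ≤ ε₀ + Δε and ⟨v|H|v⟩ ≤ ε₀ + Δε and |⟨u|v⟩| ≤ β < 1, there exist orthonormal vectors |u'⟩, |v'⟩ in span{|u⟩,|v⟩} such that ⟨u'|H|u'⟩ ≤ ε₀ + Δε(1+β)/(1-β) and ⟨v'|H|v'⟩ ≤ ε₀ + Δε(1+β)/(1-β). -/

import Mathlib

/-!
The excess energy `re ⟪w, A w⟫ - ε₀ ‖w‖²` is the quadratic form of the positive operator
`A - ε₀`, so it equals `‖S w‖²` for some operator `S` (e.g. `S = √(A - ε₀)`), the square of a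
seminorm. Keep `u' = u` and let `v'` be the normalised Gram–Schmidt vector
`w = v - ⟪u, v⟫ u`, of norm `√(1 - c²)` with `c = ‖⟪u, v⟫‖`. By the triangle inequality
`‖S w‖ ≤ (1 + c) √(Δε)`, and `(1 + c)² / (1 - c²) = (1 + c) / (1 - c) ≤ (1 + β) / (1 - β)`.
-/

open scoped InnerProductSpace
open RCLike

section GramSchmidtStep

variable {𝕜 E F : Type*} [RCLike 𝕜] [NormedAddCommGroup E] [InnerProductSpace 𝕜 E] {u : E}

theorem inner_sub_inner_smul_eq_zero (hu : ‖u‖ = 1) (v : E) :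
    ⟪u, v - ⟪u, v⟫_𝕜 • u⟫_𝕜 = 0 := by
  rw [inner_sub_right, inner_smul_right, inner_self_eq_norm_sq_to_K, hu]
  simp

theorem norm_sub_inner_smul_sq (hu : ‖u‖ = 1) (v : E) :
    ‖v - ⟪u, v⟫_𝕜 • u‖ ^ 2 = ‖v‖ ^ 2 - ‖⟪u, v⟫_𝕜‖ ^ 2 := by
  rw [@norm_sub_sq 𝕜, inner_smul_right, ← inner_conj_symm v u, RCLike.mul_conj, norm_smul, hu]
  norm_cast
  ring

theorem norm_sq_apply_sub_inner_smul_le [SeminormedAddCommGroup F] [NormedSpace 𝕜 F]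
    (S : E →L[𝕜] F) {v : E} {δ β : ℝ} (hu : ‖u‖ = 1) (hv : ‖v‖ = 1)
    (hSu : ‖S u‖ ^ 2 ≤ δ) (hSv : ‖S v‖ ^ 2 ≤ δ) (hβ : ‖⟪u, v⟫_𝕜‖ ≤ β) (hβ1 : β < 1) :
    ‖S (v - ⟪u, v⟫_𝕜 • u)‖ ^ 2 ≤ δ * (1 + β) / (1 - β) * ‖v - ⟪u, v⟫_𝕜 • u‖ ^ 2 := by
  set c := ‖⟪u, v⟫_𝕜‖
  have hc : 0 ≤ c := norm_nonneg _
  have hδ : 0 ≤ δ := (sq_nonneg _).trans hSu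
  have hSu' : ‖S u‖ ≤ √δ := Real.le_sqrt_of_sq_le hSu
  have hSv' : ‖S v‖ ≤ √δ := Real.le_sqrt_of_sq_le hSv
  have triangle : ‖S (v - ⟪u, v⟫_𝕜 • u)‖ ≤ (1 + c) * √δ :=
    calc ‖S (v - ⟪u, v⟫_𝕜 • u)‖ ≤ ‖S v‖ + c * ‖S u‖ := by
          rw [map_sub, map_smul, ← norm_smul]
          exact norm_sub_le _ _
      _ ≤ (1 + c) * √δ := by nlinarith
  rw [norm_sub_inner_smul_sq hu, hv, div_mul_eq_mul_div, le_div_iff₀ (by linarith)]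
  calc ‖S (v - ⟪u, v⟫_𝕜 • u)‖ ^ 2 * (1 - β) ≤ ((1 + c) * √δ) ^ 2 * (1 - β) := by gcongr
    _ = δ * (1 + c) * ((1 + c) * (1 - β)) := by rw [mul_pow, Real.sq_sqrt hδ]; ring
    _ ≤ δ * (1 + c) * ((1 + β) * (1 - c)) :=
        mul_le_mul_of_nonneg_left (by nlinarith) (by positivity)
    _ = δ * (1 + β) * (1 ^ 2 - c ^ 2) := by ring

end GramSchmidtStep

section ExcessEnergy

variable {E : Type*} [NormedAddCommGroup E] [InnerProductSpace ℂ E] [CompleteSpace E]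

theorem ContinuousLinearMap.IsPositive.exists_re_inner_eq_norm_sq {B : E →L[ℂ] E}
    (hB : B.IsPositive) : ∃ S : E →L[ℂ] E, ∀ w, (⟪w, B w⟫_ℂ).re = ‖S w‖ ^ 2 := by
  obtain ⟨S, rfl⟩ :=
    CStarAlgebra.nonneg_iff_eq_star_mul_self.mp ((nonneg_iff_isPositive B).mpr hB)
  refine ⟨S, fun w => ?_⟩
  rw [mul_apply_eq_comp, ContinuousLinearMap.star_eq_adjoint,
    ContinuousLinearMap.adjoint_inner_right, ← inner_self_eq_norm_sq (𝕜 := ℂ), re_to_complex]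

theorem IsSelfAdjoint.exists_re_inner_eq_mul_norm_sq_add_norm_sq {A : E →L[ℂ] E}
    (hA : IsSelfAdjoint A) {ε₀ : ℝ} (hε₀ : ∀ w : E, ε₀ * ‖w‖ ^ 2 ≤ (⟪w, A w⟫_ℂ).re) :
    ∃ S : E →L[ℂ] E, ∀ w, (⟪w, A w⟫_ℂ).re = ε₀ * ‖w‖ ^ 2 + ‖S w‖ ^ 2 := by
  have hshift (w : E) :
      (⟪w, (A - algebraMap ℝ _ ε₀) w⟫_ℂ).re = (⟪w, A w⟫_ℂ).re - ε₀ * ‖w‖ ^ 2 := by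
    simp [← inner_self_eq_norm_sq (𝕜 := ℂ)]
  have hpos : (A - algebraMap ℝ _ ε₀).IsPositive := by
    refine ContinuousLinearMap.isPositive_def'.mpr
      ⟨hA.sub (.algebraMap _ (.all ε₀)), fun w => ?_⟩
    rw [ContinuousLinearMap.reApplyInnerSelf_apply, inner_re_symm, re_to_complex, hshift]
    linarith [hε₀ w]
  obtain ⟨S, hS⟩ := hpos.exists_re_inner_eq_norm_sq
  exact ⟨S, fun w => by linarith [hS w, hshift w]⟩

end ExcessEnergy

theorem orthogonalising_lemma_general {E : Type*} [NormedAddCommGroup E]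
    [InnerProductSpace ℂ E] [FiniteDimensional ℂ E]
    (A : E →L[ℂ] E) (ε₀ ε Δ β : ℝ) (u v : E)
    (hA : IsSelfAdjoint A)
    (hε₀ : ∀ w : E, ε₀ * ‖w‖ ^ 2 ≤ (⟪w, A w⟫_ℂ).re)
    (hβ1 : β < 1)
    (hu : ‖u‖ = 1) (hv : ‖v‖ = 1)
    (hEu : (⟪u, A u⟫_ℂ).re ≤ ε₀ + Δ * ε)
    (hEv : (⟪v, A v⟫_ℂ).re ≤ ε₀ + Δ * ε)
    (hover : ‖⟪u, v⟫_ℂ‖ ≤ β) :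
    ∃ u' v' : E, ‖u'‖ = 1 ∧ ‖v'‖ = 1 ∧ ⟪u', v'⟫_ℂ = 0 ∧
      u' ∈ Submodule.span ℂ {u, v} ∧ v' ∈ Submodule.span ℂ {u, v} ∧
      (⟪u', A u'⟫_ℂ).re ≤ ε₀ + Δ * ε * (1 + β) / (1 - β) ∧
      (⟪v', A v'⟫_ℂ).re ≤ ε₀ + Δ * ε * (1 + β) / (1 - β) := by
  obtain ⟨S, hS⟩ := hA.exists_re_inner_eq_mul_norm_sq_add_norm_sq hε₀
  have energy_of_unit {x : E} (hx : ‖x‖ = 1) : (⟪x, A x⟫_ℂ).re = ε₀ + ‖S x‖ ^ 2 := by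
    rw [hS, hx, one_pow, mul_one]
  have hSu : ‖S u‖ ^ 2 ≤ Δ * ε := by linarith [energy_of_unit hu]
  have hSv : ‖S v‖ ^ 2 ≤ Δ * ε := by linarith [energy_of_unit hv]
  set w := v - ⟪u, v⟫_ℂ • u
  have hw : w ≠ 0 := by
    have : ‖w‖ ^ 2 = 1 - ‖⟪u, v⟫_ℂ‖ ^ 2 := by rw [norm_sub_inner_smul_sq hu, hv, one_pow]
    exact norm_pos_iff.mp (by nlinarith [norm_nonneg ⟪u, v⟫_ℂ, norm_nonneg w])
  have hv' : ‖(‖w‖⁻¹ : ℂ) • w‖ = 1 := norm_smul_inv_norm hw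
  refine ⟨u, (‖w‖⁻¹ : ℂ) • w, hu, hv', ?_, ?_, ?_, ?_, ?_⟩
  · rw [inner_smul_right, inner_sub_inner_smul_eq_zero hu, mul_zero]
  · exact Submodule.subset_span (by simp)
  · exact Submodule.smul_mem _ _ <| Submodule.sub_mem _ (Submodule.subset_span (by simp)) <|
      Submodule.smul_mem _ _ (Submodule.subset_span (by simp))
  · have : Δ * ε ≤ Δ * ε * (1 + β) / (1 - β) := by
      rw [le_div_iff₀ (by linarith)]
      nlinarith [(sq_nonneg _).trans hSu, (norm_nonneg _).trans hover]
    linarith [energy_of_unit hu]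
  · rw [energy_of_unit hv', map_smul, norm_smul, mul_pow, norm_inv, Complex.norm_real,
      norm_norm, inv_pow, add_le_add_iff_left, inv_mul_le_iff₀ (by positivity), mul_comm]
    exact norm_sq_apply_sub_inner_smul_le S hu hv hSu hSv hover hβ1

/-- Orthogonalising lemma: two low-energy unit vectors with overlap at most `β < 1` can
be replaced by orthonormal vectors in their span whose energies are at most
`ε₀ + Δε(1+β)/(1-β)`. -/
theorem orthogonalising_lemma {E : Type*} [NormedAddCommGroup E]
    [InnerProductSpace ℂ E] [FiniteDimensional ℂ E]
    (A : E →L[ℂ] E) (ε₀ ε Δ β : ℝ) (u v : E)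
    (hA : IsSelfAdjoint A)
    (hε₀ : ∀ w : E, ε₀ * ‖w‖ ^ 2 ≤ (⟪w, A w⟫_ℂ).re)
    (hΔ : 0 ≤ Δ) (hε : 0 ≤ ε) (hβ0 : 0 ≤ β) (hβ1 : β < 1)
    (hu : ‖u‖ = 1) (hv : ‖v‖ = 1)
    (hind : LinearIndependent ℂ ![u, v])
    (hEu : (⟪u, A u⟫_ℂ).re ≤ ε₀ + Δ * ε)
    (hEv : (⟪v, A v⟫_ℂ).re ≤ ε₀ + Δ * ε)
    (hover : ‖⟪u, v⟫_ℂ‖ ≤ β) :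
    ∃ u' v' : E, ‖u'‖ = 1 ∧ ‖v'‖ = 1 ∧ ⟪u', v'⟫_ℂ = 0 ∧
      u' ∈ Submodule.span ℂ {u, v} ∧ v' ∈ Submodule.span ℂ {u, v} ∧
      (⟪u', A u'⟫_ℂ).re ≤ ε₀ + Δ * ε * (1 + β) / (1 - β) ∧
      (⟪v', A v'⟫_ℂ).re ≤ ε₀ + Δ * ε * (1 + β) / (1 - β) :=
  orthogonalising_lemma_general A ε₀ ε Δ β u v hA hε₀ hβ1 hu hv hEu hEv hover
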